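/- arXiv:1203.2713 — 2 statements merged into one kernel-verified Lean document; each statement's English description precedes it below -/
import Mathlib

section
/- Let f(z) = z + \sum_{n=2}^{\infty} a_n z^n be analytic on the unit disk D with |a_n| \le 1 for all n \ge 2. Then f is univalent (injective) on the disk |z| < 1 - \sqrt{2}/2; indeed Re f'(z) > 0 for |z| < 1 - \sqrt{2}/2, where r = 1 - \sqrt{2}/2 is the root in (0,1) of the equation 2(1-r)^3 + r - 1 = 0. -/
/-!
Differentiating termwise, `f' z = 1 + ∑_{k ≥ 2} k a_k z^(k-1)`, and for `|z| = r` the sum is bounded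
by `∑_{k ≥ 2} k r^(k-1) = (1 - r)⁻² - 1`, which is `< 1` exactly when `(1 - r)² > 1/2`, i.e.
`r < 1 - √2/2`; so `Re f' > 0` there. On a convex domain `Re f' > 0` forces injectivity
(Noshiro–Warschawski): along the segment from `z₁` to `z₂ = z₁ + u` the real function
`t ↦ Re (conj u * f (z₁ + t u))` has derivative `|u|² Re f' > 0`, so `f z₁ ≠ f z₂`.
-/

open Metric Complex ComplexConjugate

theorem hasSum_add_two_mul_pow_succ {𝕜 : Type*} [NormedField 𝕜] [CompleteSpace 𝕜] {r : 𝕜}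
    (hr : ‖r‖ < 1) :
    HasSum (fun n : ℕ => ((n : 𝕜) + 2) * r ^ (n + 1)) (1 / (1 - r) ^ 2 - 1) := by
  have h := hasSum_choose_mul_geometric_of_norm_lt_one 1 hr
  rw [← hasSum_nat_add_iff' 1] at h
  simpa [add_assoc, one_add_one_eq_two] using h

lemma norm_mul_add_two_mul_pow_succ_le {c w : ℂ} {ρ : ℝ} (hc : ‖c‖ ≤ 1) (hw : ‖w‖ ≤ ρ) (n : ℕ) :
    ‖c * (((n : ℂ) + 2) * w ^ (n + 1))‖ ≤ ((n : ℝ) + 2) * ρ ^ (n + 1) := by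
  have hn : ‖(n : ℂ) + 2‖ = (n : ℝ) + 2 := by exact_mod_cast Complex.norm_natCast (n + 2)
  rw [norm_mul, norm_mul, norm_pow, hn]
  calc ‖c‖ * (((n : ℝ) + 2) * ‖w‖ ^ (n + 1)) ≤ 1 * (((n : ℝ) + 2) * ρ ^ (n + 1)) := by gcongr
    _ = _ := one_mul _

lemma norm_tsum_mul_add_two_mul_pow_succ_le {c : ℕ → ℂ} (hc : ∀ n, ‖c n‖ ≤ 1) {z : ℂ}
    (hz : ‖z‖ < 1) :
    ‖∑' n : ℕ, c n * (((n : ℂ) + 2) * z ^ (n + 1))‖ ≤ 1 / (1 - ‖z‖) ^ 2 - 1 :=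
  tsum_of_norm_bounded (hasSum_add_two_mul_pow_succ (by rwa [norm_norm]))
    fun n => norm_mul_add_two_mul_pow_succ_le (hc n) le_rfl n

theorem hasDerivAt_tsum_mul_pow_add_two {c : ℕ → ℂ} (hc : ∀ n, ‖c n‖ ≤ 1) {z : ℂ}
    (hz : ‖z‖ < 1) :
    HasDerivAt (fun w : ℂ => ∑' n : ℕ, c n * w ^ (n + 2))
      (∑' n : ℕ, c n * (((n : ℂ) + 2) * z ^ (n + 1))) z := by
  obtain ⟨r, hzr, hr⟩ := exists_between hz
  have hr0 : 0 < r := (norm_nonneg z).trans_lt hzr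
  have hu := (hasSum_add_two_mul_pow_succ (𝕜 := ℝ) (r := r)
    (by rwa [Real.norm_of_nonneg hr0.le])).summable
  refine hasDerivAt_tsum_of_isPreconnected (g := fun n w => c n * w ^ (n + 2))
    (g' := fun n w => c n * (((n : ℂ) + 2) * w ^ (n + 1)))
    hu isOpen_ball (convex_ball (0 : ℂ) r).isPreconnected
    (fun n w _ => ?_) (fun n w hw => ?_) (mem_ball_self hr0) ?_ (mem_ball_zero_iff.2 hzr)
  · simpa [mul_comm] using (hasDerivAt_pow (n + 2) w).const_mul (c n)
  · exact norm_mul_add_two_mul_pow_succ_le (hc n) (mem_ball_zero_iff.1 hw).le n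
  · simp

lemma one_div_one_sub_sq_sub_one_lt_one {ρ : ℝ} (hρ : ρ < 1 - √2 / 2) :
    1 / (1 - ρ) ^ 2 - 1 < 1 := by
  have h2 : √2 / 2 < 1 - ρ := by linarith
  have hsq : 1 / 2 < (1 - ρ) ^ 2 := by
    calc (1 : ℝ) / 2 = (√2 / 2) ^ 2 := by rw [div_pow, Real.sq_sqrt zero_le_two]; norm_num
      _ < (1 - ρ) ^ 2 := by gcongr
  rw [sub_lt_iff_lt_add, one_add_one_eq_two, div_lt_iff₀ (by positivity)]
  linarith

section ShiftedSeries

variable {c : ℕ → ℂ} {f : ℂ → ℂ}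

lemma hasDerivAt_of_eqOn_ball_id_add_tsum (hc : ∀ n, ‖c n‖ ≤ 1)
    (hf : ∀ z ∈ ball (0 : ℂ) 1, f z = z + ∑' n : ℕ, c n * z ^ (n + 2)) {z : ℂ} (hz : ‖z‖ < 1) :
    HasDerivAt f (1 + ∑' n : ℕ, c n * (((n : ℂ) + 2) * z ^ (n + 1))) z := by
  refine ((hasDerivAt_id z).add (hasDerivAt_tsum_mul_pow_add_two hc hz)).congr_of_eventuallyEq ?_
  filter_upwards [isOpen_ball.mem_nhds (mem_ball_zero_iff.2 hz)] with w hw using hf w hw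

lemma re_deriv_pos_of_norm_lt (hc : ∀ n, ‖c n‖ ≤ 1)
    (hf : ∀ z ∈ ball (0 : ℂ) 1, f z = z + ∑' n : ℕ, c n * z ^ (n + 2)) {z : ℂ}
    (hz : ‖z‖ < 1 - √2 / 2) : 0 < (deriv f z).re := by
  have hz1 : ‖z‖ < 1 := hz.trans (by simp [Real.sqrt_pos])
  rw [(hasDerivAt_of_eqOn_ball_id_add_tsum hc hf hz1).deriv, add_re, one_re]
  have hre := (abs_le.1 (abs_re_le_norm (∑' n : ℕ, c n * (((n : ℂ) + 2) * z ^ (n + 1))))).1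
  linarith [norm_tsum_mul_add_two_mul_pow_succ_le hc hz1, one_div_one_sub_sq_sub_one_lt_one hz]

end ShiftedSeries

lemma hasDerivAt_re_conj_mul_comp_add_smul {f : ℂ → ℂ} {f' z u : ℂ} {t : ℝ}
    (hf : HasDerivAt f f' (z + t • u)) :
    HasDerivAt (fun s : ℝ => (conj u * f (z + s • u)).re) (normSq u * f'.re) t := by
  have hline : HasDerivAt (fun s : ℝ => z + s • u) u t := by
    simpa using ((hasDerivAt_id t).smul_const u).const_add z
  have hmul : conj u * (f' * u) = (normSq u : ℂ) * f' := by rw [← mul_conj]; ring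
  have hcomp := (hf.comp t hline).const_mul (conj u)
  rw [hmul] at hcomp
  rw [← re_ofReal_mul]
  exact reCLM.hasFDerivAt.comp_hasDerivAt t hcomp

theorem Convex.injOn_of_re_deriv_pos {U : Set ℂ} {f : ℂ → ℂ} (hU : Convex ℝ U)
    (hf : ∀ z ∈ U, DifferentiableAt ℂ f z) (hpos : ∀ z ∈ U, 0 < (deriv f z).re) :
    Set.InjOn f U := by
  intro z₁ h₁ z₂ h₂ hfz
  by_contra hne
  set u := z₂ - z₁
  have hseg : ∀ t ∈ Set.Icc (0 : ℝ) 1, z₁ + t • u ∈ U := fun t ht => hU.add_smul_sub_mem h₁ h₂ ht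
  have hφ : ∀ t ∈ Set.Icc (0 : ℝ) 1, HasDerivAt (fun s : ℝ => (conj u * f (z₁ + s • u)).re)
      (normSq u * (deriv f (z₁ + t • u)).re) t := fun t ht =>
    hasDerivAt_re_conj_mul_comp_add_smul (hf _ (hseg t ht)).hasDerivAt
  have hmono : StrictMonoOn (fun s : ℝ => (conj u * f (z₁ + s • u)).re) (Set.Icc 0 1) := by
    refine strictMonoOn_of_deriv_pos (convex_Icc 0 1)
      (fun t ht => (hφ t ht).continuousAt.continuousWithinAt) fun t ht => ?_
    rw [interior_Icc] at ht
    have ht' := Set.Ioo_subset_Icc_self ht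
    rw [(hφ t ht').deriv]
    exact mul_pos (normSq_pos.2 (sub_ne_zero.2 (Ne.symm hne))) (hpos _ (hseg t ht'))
  have hlt := hmono (Set.left_mem_Icc.2 zero_le_one) (Set.right_mem_Icc.2 zero_le_one) zero_lt_one
  simp [u, hfz] at hlt

/-- If `f(z) = z + ∑_{n≥2} a_n zⁿ` is analytic on the unit disk with `|a_n| ≤ 1` for
all `n ≥ 2`, then `Re f'(z) > 0` for `|z| < 1 - √2/2`, and `f` is injective on that
disk; here `r = 1 - √2/2 ∈ (0,1)` is a root of `2(1-r)³ + r - 1 = 0`. -/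
theorem stmt6 (a : ℕ → ℂ) (ha : ∀ n : ℕ, 2 ≤ n → ‖a n‖ ≤ 1)
    (f : ℂ → ℂ)
    (hf : ∀ z ∈ Metric.ball (0 : ℂ) 1,
      f z = z + ∑' n : ℕ, a (n + 2) * z ^ (n + 2)) :
    (∀ z ∈ Metric.ball (0 : ℂ) (1 - Real.sqrt 2 / 2), 0 < (deriv f z).re) ∧
    Set.InjOn f (Metric.ball (0 : ℂ) (1 - Real.sqrt 2 / 2)) ∧
    (0 < 1 - Real.sqrt 2 / 2 ∧ 1 - Real.sqrt 2 / 2 < 1 ∧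
      2 * (1 - (1 - Real.sqrt 2 / 2)) ^ 3 + (1 - Real.sqrt 2 / 2) - 1 = 0) := by
  have hc : ∀ n, ‖a (n + 2)‖ ≤ 1 := fun n => ha (n + 2) (Nat.le_add_left 2 n)
  have hpos : ∀ z ∈ ball (0 : ℂ) (1 - √2 / 2), 0 < (deriv f z).re := fun z hz =>
    re_deriv_pos_of_norm_lt hc hf (mem_ball_zero_iff.1 hz)
  -- `deriv f z = 0` wherever `f` is not differentiable
  have hdiff : ∀ z ∈ ball (0 : ℂ) (1 - √2 / 2), DifferentiableAt ℂ f z := fun z hz =>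
    differentiableAt_of_deriv_ne_zero fun h => (hpos z hz).ne' (by rw [h, zero_re])
  have hsq : √2 ^ 2 = 2 := Real.sq_sqrt zero_le_two
  refine ⟨hpos, (convex_ball _ _).injOn_of_re_deriv_pos hdiff hpos, ?_, ?_, ?_⟩
  · nlinarith [Real.sqrt_nonneg 2]
  · simp [Real.sqrt_pos]
  · linear_combination (√2 / 4) * hsq
end

section
/- Let f belong to the class U, and write z/f(z) = 1 + \sum_{n=1}^{\infty} b_n z^n on the unit disk D. Then |z/f(z) - 1 - b_1 z| \le |z|^2 for all z \in D; that is, |(z/f(z)) - 1 + (f''(0)/2) z| \le |z|^2 on D (since b_1 = -f''(0)/2). -/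
/-!
Let `g(z) = z / f(z)`, extended by `g(0) = 1`, and `q(z) = (g(z) - g(0)) / z`. A direct computation
gives `z² q'(z) = -(g(z) - z g'(z) - 1) = 1 - f'(z) (z / f(z))²`, which has modulus `< 1` on the
disk, so the maximum principle on the circles `|z| = r → 1` yields `|q'| ≤ 1`. The mean value
inequality then gives `|q(z) - q(0)| ≤ |z|`, that is `|g(z) - 1 - g'(0) z| ≤ |z|²`. Finally
`b₁ = g'(0)` by uniqueness of power series, and `g'(0) = -f''(0)/2` since `g = 1 / (f(z)/z)`.
-/

open Metric Filter Topology FormalMultilinearSeries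
open scoped NNReal

/-- The class `U`: normalized analytic functions `f` on the unit disk with
`f(z)/z ≠ 0` and `|f'(z)(z/f(z))² - 1| < 1` on the disk. -/
def ClassU (f : ℂ → ℂ) : Prop :=
  DifferentiableOn ℂ f (Metric.ball 0 1) ∧
  f 0 = 0 ∧ deriv f 0 = 1 ∧
  (∀ z ∈ Metric.ball (0 : ℂ) 1, z ≠ 0 → f z ≠ 0) ∧
  (∀ z ∈ Metric.ball (0 : ℂ) 1, z ≠ 0 → ‖deriv f z * (z / f z) ^ 2 - 1‖ < 1)

section

variable {𝕜 : Type*} [NontriviallyNormedField 𝕜]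

theorem sub_sq_mul_deriv_dslope {f : 𝕜 → 𝕜} {a z : 𝕜} (hz : z ≠ a)
    (hf : DifferentiableAt 𝕜 f z) :
    (z - a) ^ 2 * deriv (dslope f a) z = (z - a) * deriv f z - (f z - f a) := by
  have hza : z - a ≠ 0 := sub_ne_zero.mpr hz
  have hslope : dslope f a =ᶠ[𝓝 z] fun w => (f w - f a) / (w - a) := by
    filter_upwards [isOpen_ne.mem_nhds hz] with w hw
    rw [dslope_of_ne _ hw, slope_def_field]
  rw [hslope.deriv_eq,
    deriv_fun_div (hf.sub_const (f a)) (differentiableAt_fun_id.sub_const a) hza]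
  simp only [deriv_sub_const, deriv_id'']
  field_simp

theorem deriv_dslope_self [CompleteSpace 𝕜] [CharZero 𝕜] {f : 𝕜 → 𝕜} {a : 𝕜}
    (hf : AnalyticAt 𝕜 f a) : deriv (dslope f a) a = iteratedDeriv 2 f a / 2 := by
  rw [hf.hasFPowerSeriesAt.has_fpower_series_dslope_fslope.deriv]
  change (fslope _).coeff 1 = _
  rw [coeff_fslope, coeff_ofScalars]
  norm_num

theorem deriv_id_div_mul_sq {g : 𝕜 → 𝕜} {z : 𝕜} (hg : DifferentiableAt 𝕜 g z) (hz : g z ≠ 0) :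
    deriv (fun w => w / g w) z * g z ^ 2 = g z - z * deriv g z := by
  rw [deriv_fun_div differentiableAt_fun_id hg hz]
  field_simp
  simp

end

theorem hasFPowerSeriesOnBall_ofScalars_of_hasSum {g : ℂ → ℂ} {b : ℕ → ℂ} {r : ℝ≥0}
    (hr : 0 < r) (h0 : g 0 = b 0)
    (h : ∀ z ∈ ball (0 : ℂ) r, z ≠ 0 → HasSum (fun n => b n * z ^ n) (g z)) :
    HasFPowerSeriesOnBall g (.ofScalars ℂ b) 0 r := by
  have hsum : ∀ z ∈ ball (0 : ℂ) r, HasSum (fun n => b n * z ^ n) (g z) := by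
    intro z hz
    rcases eq_or_ne z 0 with rfl | hz0
    · simpa [h0] using hasSum_single (f := fun n => b n * (0 : ℂ) ^ n) 0 fun n hn => by simp [hn]
    · exact h z hz hz0
  refine ⟨?_, by exact_mod_cast hr, fun {y} hy => ?_⟩
  · refine ENNReal.le_of_forall_pos_nnreal_lt fun ρ _ hρ => le_radius_of_summable _ ?_
    simpa [norm_mul] using (hsum ρ (by simpa using hρ)).summable.norm
  · rw [Metric.eball_coe, mem_ball_zero_iff] at hy
    simpa [smul_eq_mul, mul_comm] using hsum y (mem_ball_zero_iff.mpr hy)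

theorem norm_le_one_of_norm_pow_mul_le_one {φ : ℂ → ℂ} {n : ℕ}
    (hφ : DifferentiableOn ℂ φ (ball 0 1)) (h : ∀ z ∈ ball (0 : ℂ) 1, ‖z ^ n * φ z‖ ≤ 1)
    {z : ℂ} (hz : z ∈ ball (0 : ℂ) 1) : ‖φ z‖ ≤ 1 := by
  rw [mem_ball_zero_iff] at hz
  have hr : ∀ r ∈ Set.Ioo ‖z‖ 1, ‖φ z‖ * r ^ n ≤ 1 := by
    rintro r ⟨hzr, hr1⟩
    have hr0 : 0 < r := (norm_nonneg z).trans_lt hzr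
    have hsub : closedBall (0 : ℂ) r ⊆ ball 0 1 := closedBall_subset_ball hr1
    have hmax : ‖φ z‖ ≤ 1 / r ^ n := by
      refine Complex.norm_le_of_forall_mem_frontier_norm_le isBounded_ball
        (hφ.diffContOnCl_ball hsub) (fun w hw => ?_) (subset_closure (mem_ball_zero_iff.mpr hzr))
      rw [frontier_ball _ hr0.ne', mem_sphere_zero_iff_norm] at hw
      have hw1 := h w (hsub (mem_closedBall_zero_iff.mpr hw.le))
      rw [norm_mul, norm_pow, hw] at hw1
      rw [le_div_iff₀ (by positivity)]
      linarith
    rwa [le_div_iff₀ (by positivity)] at hmax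
  have hlim : Tendsto (fun r : ℝ => ‖φ z‖ * r ^ n) (𝓝[<] 1) (𝓝 ‖φ z‖) := by
    have hc : Continuous fun r : ℝ => ‖φ z‖ * r ^ n := by fun_prop
    simpa using (hc.tendsto 1).mono_left nhdsWithin_le_nhds
  exact le_of_tendsto hlim (eventually_of_mem (Ioo_mem_nhdsLT hz) hr)

theorem norm_sub_sub_deriv_mul_le_sq {g : ℂ → ℂ} (hg : DifferentiableOn ℂ g (ball 0 1))
    (h : ∀ z ∈ ball (0 : ℂ) 1, ‖g z - z * deriv g z - g 0‖ ≤ 1) {z : ℂ}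
    (hz : z ∈ ball (0 : ℂ) 1) : ‖g z - g 0 - deriv g 0 * z‖ ≤ ‖z‖ ^ 2 := by
  set q := dslope g 0
  have hq : DifferentiableOn ℂ q (ball 0 1) :=
    (Complex.differentiableOn_dslope (ball_mem_nhds 0 one_pos)).mpr hg
  have hq' : ∀ w ∈ ball (0 : ℂ) 1, ‖deriv q w‖ ≤ 1 := by
    refine fun _ => norm_le_one_of_norm_pow_mul_le_one (n := 2) (hq.deriv isOpen_ball)
      fun w hw => ?_
    rcases eq_or_ne w 0 with rfl | hw0
    · simp
    · have hsq := sub_sq_mul_deriv_dslope hw0 (hg.differentiableAt (isOpen_ball.mem_nhds hw))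
      rw [sub_zero] at hsq
      rw [hsq, ← norm_neg, show -(w * deriv g w - (g w - g 0)) = g w - w * deriv g w - g 0 by ring]
      exact h w hw
  have hmvt : ‖q z - q 0‖ ≤ 1 * ‖z - 0‖ :=
    (convex_ball 0 1).norm_image_sub_le_of_norm_deriv_le
      (fun w hw => hq.differentiableAt (isOpen_ball.mem_nhds hw)) hq' (mem_ball_self one_pos) hz
  have hrepr : g z - g 0 - deriv g 0 * z = z * (q z - q 0) := by
    have := sub_smul_dslope g 0 z
    rw [sub_zero, smul_eq_mul] at this
    change _ = z * (dslope g 0 z - dslope g 0 0)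
    rw [dslope_same, mul_sub, this]
    ring
  rw [hrepr, norm_mul, sq]
  gcongr
  simpa using hmvt

/-- The function `z / f z`, extended to `z = 0` by `1 / f'(0)`. -/
noncomputable def invDslope (f : ℂ → ℂ) (z : ℂ) : ℂ := (dslope f 0 z)⁻¹

theorem invDslope_zero (f : ℂ → ℂ) : invDslope f 0 = (deriv f 0)⁻¹ := by
  rw [invDslope, dslope_same]

theorem eq_div_invDslope {f : ℂ → ℂ} (hf0 : f 0 = 0) : f = fun z => z / invDslope f z := by
  funext z
  simpa [invDslope, hf0, smul_eq_mul] using (sub_smul_dslope f 0 z).symm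

theorem div_eq_invDslope {f : ℂ → ℂ} (hf0 : f 0 = 0) {z : ℂ} (hz : z ≠ 0) :
    z / f z = invDslope f z := by
  rw [congrFun (eq_div_invDslope hf0) z]
  exact div_div_cancel₀ hz

namespace ClassU

variable {f : ℂ → ℂ}

theorem invDslope_zero_eq_one (hf : ClassU f) : invDslope f 0 = 1 := by
  rw [invDslope_zero, hf.2.2.1, inv_one]

theorem dslope_ne_zero (hf : ClassU f) {z : ℂ} (hz : z ∈ ball (0 : ℂ) 1) : dslope f 0 z ≠ 0 := by
  obtain ⟨-, hf0, hf1, hf_ne, -⟩ := hf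
  rcases eq_or_ne z 0 with rfl | hz0
  · rw [dslope_same, hf1]
    exact one_ne_zero
  · rw [dslope_of_ne _ hz0, slope_def_field, hf0, sub_zero, sub_zero]
    exact div_ne_zero (hf_ne z hz hz0) hz0

theorem differentiableOn_dslope (hf : ClassU f) : DifferentiableOn ℂ (dslope f 0) (ball 0 1) :=
  (Complex.differentiableOn_dslope (ball_mem_nhds 0 one_pos)).mpr hf.1

theorem differentiableOn_invDslope (hf : ClassU f) :
    DifferentiableOn ℂ (invDslope f) (ball 0 1) :=
  hf.differentiableOn_dslope.inv fun _ hz => hf.dslope_ne_zero hz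

theorem deriv_invDslope_zero (hf : ClassU f) :
    deriv (invDslope f) 0 = -(iteratedDeriv 2 f 0) / 2 := by
  have hB : ball (0 : ℂ) 1 ∈ 𝓝 0 := ball_mem_nhds 0 one_pos
  have hslope0 : dslope f 0 0 = 1 := by rw [dslope_same, hf.2.2.1]
  rw [show invDslope f = fun z => (dslope f 0 z)⁻¹ from rfl,
    deriv_fun_inv'' (hf.differentiableOn_dslope.differentiableAt hB)
      (hf.dslope_ne_zero (mem_ball_self one_pos)),
    hslope0, deriv_dslope_self (hf.1.analyticAt hB)]
  ring

theorem norm_invDslope_sub_mul_deriv_sub_le_one (hf : ClassU f) {z : ℂ}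
    (hz : z ∈ ball (0 : ℂ) 1) :
    ‖invDslope f z - z * deriv (invDslope f) z - invDslope f 0‖ ≤ 1 := by
  rcases eq_or_ne z 0 with rfl | hz0
  · simp
  · have hg := hf.differentiableOn_invDslope.differentiableAt (isOpen_ball.mem_nhds hz)
    rw [← deriv_id_div_mul_sq hg (inv_ne_zero (hf.dslope_ne_zero hz)), ← eq_div_invDslope hf.2.1,
      hf.invDslope_zero_eq_one, ← div_eq_invDslope hf.2.1 hz0]
    exact (hf.2.2.2.2 z hz hz0).le

end ClassU

/-- If `f ∈ U` and `z/f(z) = 1 + ∑_{n≥1} b_n zⁿ` on the unit disk, then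
`|z/f(z) - 1 - b₁ z| ≤ |z|²` there; moreover `b₁ = -f''(0)/2`. -/
theorem stmt16 (f : ℂ → ℂ) (hf : ClassU f) (b : ℕ → ℂ) (hb0 : b 0 = 1)
    (hrep : ∀ z ∈ Metric.ball (0 : ℂ) 1, z ≠ 0 →
      HasSum (fun n : ℕ => b n * z ^ n) (z / f z)) :
    (∀ z ∈ Metric.ball (0 : ℂ) 1, z ≠ 0 →
      ‖z / f z - 1 - b 1 * z‖ ≤ ‖z‖ ^ 2) ∧
    b 1 = -(iteratedDeriv 2 f 0) / 2 := by
  have hps : HasFPowerSeriesOnBall (invDslope f) (.ofScalars ℂ b) 0 1 := by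
    refine hasFPowerSeriesOnBall_ofScalars_of_hasSum one_pos
      (hf.invDslope_zero_eq_one.trans hb0.symm) fun z hz hz0 => ?_
    rw [← div_eq_invDslope hf.2.1 hz0]
    exact hrep z (by simpa using hz) hz0
  have hb1 : b 1 = deriv (invDslope f) 0 := by
    rw [hps.hasFPowerSeriesAt.deriv]
    exact coeff_ofScalars.symm
  refine ⟨fun z hz hz0 => ?_, hb1.trans hf.deriv_invDslope_zero⟩
  rw [div_eq_invDslope hf.2.1 hz0, hb1, ← hf.invDslope_zero_eq_one]
  exact norm_sub_sub_deriv_mul_le_sq hf.differentiableOn_invDslope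
    (fun w hw => hf.norm_invDslope_sub_mul_deriv_sub_le_one hw) hz
end
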